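/- Let A be an index type, d ≥ 1 a natural number, and a : (A →₀ ℕ) → ℝ a superexponential d-regular admissible positive function; set A_d = (∑_α a_α^{−d})^{1/2}. Let R > 0 and (φ_n)_{n∈ℕ} be complex numbers such that ∑_n |φ_n| r^n < ∞ for every 0 < r < R. Let f : (A →₀ ℕ) → ℂ with ‖f‖_{p₀} < ∞ for some p₀ ∈ ℕ and with |f_0| < R / A_d. Then there exists p ∈ ℕ such that ∑_{n∈ℕ} |φ_n| · ‖f^{*n}‖_p < ∞ (so the series ∑_n φ_n f^{*n} converges absolutely in the weighted ℓ² norm ‖·‖_p). -/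

import Mathlib

/-!
By Cauchy–Schwarz against the weights `a α ^ (-d)` and superexponentiality of `a`,
`‖f * g‖_{q+d}² ≤ A_d² ‖f‖_q² ‖g‖_{q+d}²`, so `‖f^{*n}‖_{q+d} ≤ (A_d ‖f‖_q)^n`.
Since `a α > 1` for `α ≠ 0`, dominated convergence gives `‖f‖_q → |f 0|` as `q → ∞`; choosing `q`
with `A_d ‖f‖_q < R`, the series is dominated by `∑ |φ n| r ^ n` for some `r < R`.
-/

open scoped ENNReal

/-- The convolution (Cauchy product) of two families indexed by the free commutative
monoid `A →₀ ℕ`, i.e. multiplication in `MvPowerSeries A ℂ`. -/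
noncomputable def conv {A : Type*} [DecidableEq A] (f g : (A →₀ ℕ) → ℂ) : (A →₀ ℕ) → ℂ :=
  fun γ => ∑ x ∈ Finset.HasAntidiagonal.antidiagonal γ, f x.1 * g x.2

/-- The `n`-th convolution power: `f^{*0} = 1` (the indicator of `α = 0`) and
`f^{*(n+1)} = f * f^{*n}`. -/
noncomputable def convPow {A : Type*} [DecidableEq A] (f : (A →₀ ℕ) → ℂ) : ℕ → (A →₀ ℕ) → ℂ
  | 0 => fun γ => if γ = 0 then 1 else 0
  | n + 1 => conv f (convPow f n)

/-- The squared weighted `ℓ²`-norm `‖f‖_p² = ∑' α, |f α|² a α ^ (-p)`, as a sum in `[0,∞]`. -/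
noncomputable def wsum {A : Type*} (a : (A →₀ ℕ) → ℝ) (p : ℕ) (f : (A →₀ ℕ) → ℂ) : ℝ≥0∞ :=
  ∑' α, ENNReal.ofReal (‖f α‖ ^ 2 / (a α) ^ p)

/-- The weighted `ℓ²`-norm `‖f‖_p`, with values in `[0,∞]`. -/
noncomputable def wnorm {A : Type*} (a : (A →₀ ℕ) → ℝ) (p : ℕ) (f : (A →₀ ℕ) → ℂ) : ℝ≥0∞ :=
  (wsum a p f) ^ (2⁻¹ : ℝ)

open Filter Topology Finset Finset.HasAntidiagonal

section Weights

variable {A : Type*} {a : (A →₀ ℕ) → ℝ}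

theorem one_le_of_superexp (h0 : a 0 = 1) (hgen : ∀ n, 1 ≤ a (Finsupp.single n 1))
    (hsup : ∀ α β, a α * a β ≤ a (α + β)) (α : A →₀ ℕ) : 1 ≤ a α := by
  let S : AddSubmonoid (A →₀ ℕ) :=
    { carrier := {α | 1 ≤ a α}
      zero_mem' := h0.ge
      add_mem' := fun hα hβ => (one_le_mul_of_one_le_of_one_le hα hβ).trans (hsup _ _) }
  induction α using Finsupp.induction with
  | zero => exact h0.ge
  | single_add n b f _ _ ih =>
    refine S.add_mem ?_ (show f ∈ S from ih)
    rw [← Finsupp.smul_single_one]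
    exact S.nsmul_mem (hgen n) b

theorem one_lt_of_superexp (h0 : a 0 = 1) (hgen : ∀ n, 1 < a (Finsupp.single n 1))
    (hsup : ∀ α β, a α * a β ≤ a (α + β)) {α : A →₀ ℕ} (hα : α ≠ 0) : 1 < a α := by
  obtain ⟨n, hn⟩ := Finsupp.ne_iff.mp hα
  have hle : Finsupp.single n 1 ≤ α := Finsupp.single_le_iff.mpr (Nat.one_le_iff_ne_zero.mpr hn)
  calc 1 < a (Finsupp.single n 1) * a (α - Finsupp.single n 1) :=
        one_lt_mul_of_lt_of_le (hgen n) (one_le_of_superexp h0 (fun n => (hgen n).le) hsup _)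
    _ ≤ a α := (hsup _ _).trans_eq (congrArg a (add_tsub_cancel_of_le hle))

end Weights

theorem ENNReal.tsum_mul_tsum_eq_tsum_sum_antidiagonal {M : Type*} [AddMonoid M]
    [HasAntidiagonal M] (f g : M → ℝ≥0∞) :
    (∑' α, f α) * ∑' β, g β = ∑' γ, ∑ x ∈ antidiagonal γ, f x.1 * g x.2 := by
  simp_rw [← ENNReal.tsum_mul_right, ← ENNReal.tsum_mul_left]
  rw [← ENNReal.tsum_prod (f := fun α β => f α * g β),
    ← HasAntidiagonal.sigmaAntidiagonalEquivProd.tsum_eq, ENNReal.tsum_sigma']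
  exact tsum_congr fun γ => Finset.tsum_subtype (antidiagonal γ) fun x => f x.1 * g x.2

theorem sum_antidiagonal_fst_le_tsum {M : Type*} [AddMonoid M] [IsLeftCancelAdd M]
    [HasAntidiagonal M] (h : M → ℝ≥0∞) (γ : M) : ∑ x ∈ antidiagonal γ, h x.1 ≤ ∑' α, h α := by
  classical
  have hinj : Set.InjOn Prod.fst (antidiagonal γ : Set (M × M)) := fun x hx y hy hxy =>
    Prod.ext hxy <| add_left_cancel <| (mem_antidiagonal.mp hx).trans <|
      hxy ▸ (mem_antidiagonal.mp hy).symm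
  rw [← Finset.sum_image hinj]
  exact ENNReal.sum_le_tsum _

section Convolution

variable {A : Type*} [DecidableEq A] {a : (A →₀ ℕ) → ℝ}

theorem norm_conv_sq_div_le (hpos : ∀ α, 0 < a α) (hsup : ∀ α β, a α * a β ≤ a (α + β))
    (d q : ℕ) (f g : (A →₀ ℕ) → ℂ) (γ : A →₀ ℕ) :
    ‖conv f g γ‖ ^ 2 / a γ ^ (q + d) ≤
      (∑ x ∈ antidiagonal γ, 1 / a x.1 ^ d) *
        ∑ x ∈ antidiagonal γ, ‖f x.1‖ ^ 2 / a x.1 ^ q * (‖g x.2‖ ^ 2 / a x.2 ^ (q + d)) := by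
  have hγ : 0 < a γ ^ (q + d) := pow_pos (hpos γ) _
  have hnorm : ‖conv f g γ‖ ≤ ∑ x ∈ antidiagonal γ, ‖f x.1‖ * ‖g x.2‖ :=
    (norm_sum_le _ _).trans_eq (by simp only [norm_mul])
  have hCS : (∑ x ∈ antidiagonal γ, ‖f x.1‖ * ‖g x.2‖) ^ 2 ≤
      (∑ x ∈ antidiagonal γ, 1 / a x.1 ^ d) * ∑ x ∈ antidiagonal γ,
        a γ ^ (q + d) * (‖f x.1‖ ^ 2 / a x.1 ^ q * (‖g x.2‖ ^ 2 / a x.2 ^ (q + d))) := by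
    refine sum_sq_le_sum_mul_sum_of_sq_le_mul _ (fun x _ => by have := hpos x.1; positivity)
      (fun x _ => by have := hpos x.1; have := hpos x.2; positivity) fun x hx => ?_
    have h1 := hpos x.1
    have h2 := hpos x.2
    have hw : a x.1 ^ (q + d) * a x.2 ^ (q + d) ≤ a γ ^ (q + d) := by
      rw [← mul_pow, ← mem_antidiagonal.mp hx]
      exact pow_le_pow_left₀ (by positivity) (hsup _ _) _
    calc (‖f x.1‖ * ‖g x.2‖) ^ 2
        = ‖f x.1‖ ^ 2 * ‖g x.2‖ ^ 2 * (a x.1 ^ (q + d) * a x.2 ^ (q + d)) /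
            (a x.1 ^ (q + d) * a x.2 ^ (q + d)) := by field_simp
      _ ≤ ‖f x.1‖ ^ 2 * ‖g x.2‖ ^ 2 * a γ ^ (q + d) / (a x.1 ^ (q + d) * a x.2 ^ (q + d)) := by
        gcongr
      _ = _ := by rw [pow_add]; field_simp; ring
  rw [← mul_sum] at hCS
  rw [div_le_iff₀ hγ]
  calc ‖conv f g γ‖ ^ 2 ≤ (∑ x ∈ antidiagonal γ, ‖f x.1‖ * ‖g x.2‖) ^ 2 := by gcongr
    _ ≤ _ := hCS.trans_eq (by ring)

theorem wsum_conv_le (hpos : ∀ α, 0 < a α) (hsup : ∀ α β, a α * a β ≤ a (α + β))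
    (d q : ℕ) (f g : (A →₀ ℕ) → ℂ) :
    wsum a (q + d) (conv f g) ≤
      (∑' α, ENNReal.ofReal (1 / a α ^ d)) * (wsum a q f * wsum a (q + d) g) := by
  set F : (A →₀ ℕ) → ℝ≥0∞ := fun α => ENNReal.ofReal (‖f α‖ ^ 2 / a α ^ q)
  set G : (A →₀ ℕ) → ℝ≥0∞ := fun α => ENNReal.ofReal (‖g α‖ ^ 2 / a α ^ (q + d))
  have hpoint (γ : A →₀ ℕ) : ENNReal.ofReal (‖conv f g γ‖ ^ 2 / a γ ^ (q + d)) ≤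
      (∑' α, ENNReal.ofReal (1 / a α ^ d)) * ∑ x ∈ antidiagonal γ, F x.1 * G x.2 := by
    refine (ENNReal.ofReal_le_ofReal (norm_conv_sq_div_le hpos hsup d q f g γ)).trans ?_
    have hinv (α : A →₀ ℕ) : 0 ≤ 1 / a α ^ d := by have := hpos α; positivity
    have hnn (x : (A →₀ ℕ) × (A →₀ ℕ)) :
        0 ≤ ‖f x.1‖ ^ 2 / a x.1 ^ q := by have := hpos x.1; positivity
    rw [ENNReal.ofReal_mul (sum_nonneg fun x _ => hinv x.1),
      ENNReal.ofReal_sum_of_nonneg fun x _ => hinv x.1,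
      ENNReal.ofReal_sum_of_nonneg fun x _ => mul_nonneg (hnn x) (by have := hpos x.2; positivity)]
    gcongr with x
    · exact sum_antidiagonal_fst_le_tsum _ γ
    · exact (ENNReal.ofReal_mul (hnn x)).le
  calc wsum a (q + d) (conv f g)
      ≤ ∑' γ, (∑' α, ENNReal.ofReal (1 / a α ^ d)) * ∑ x ∈ antidiagonal γ, F x.1 * G x.2 :=
        ENNReal.tsum_le_tsum hpoint
    _ = _ := by
      rw [ENNReal.tsum_mul_left]
      exact congrArg _ (ENNReal.tsum_mul_tsum_eq_tsum_sum_antidiagonal F G).symm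

theorem wsum_convPow_zero (h0 : a 0 = 1) (p : ℕ) (f : (A →₀ ℕ) → ℂ) :
    wsum a p (convPow f 0) = 1 := by
  rw [wsum, tsum_eq_single 0 fun α hα => by simp [convPow, hα]]
  simp [convPow, h0]

theorem wnorm_convPow_le (hpos : ∀ α, 0 < a α) (h0 : a 0 = 1)
    (hsup : ∀ α β, a α * a β ≤ a (α + β)) (d q : ℕ) (f : (A →₀ ℕ) → ℂ) (n : ℕ) :
    wnorm a (q + d) (convPow f n) ≤
      ((∑' α, ENNReal.ofReal (1 / a α ^ d)) ^ (2⁻¹ : ℝ) * wnorm a q f) ^ n := by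
  set S := ∑' α, ENNReal.ofReal (1 / a α ^ d)
  have h2 : (0 : ℝ) ≤ 2⁻¹ := by norm_num
  induction n with
  | zero => rw [pow_zero, wnorm, wsum_convPow_zero h0, ENNReal.one_rpow]
  | succ k ih =>
    calc wnorm a (q + d) (convPow f (k + 1))
        ≤ (S * (wsum a q f * wsum a (q + d) (convPow f k))) ^ (2⁻¹ : ℝ) :=
          ENNReal.rpow_le_rpow (wsum_conv_le hpos hsup d q f (convPow f k)) h2
      _ = S ^ (2⁻¹ : ℝ) * wnorm a q f * wnorm a (q + d) (convPow f k) := by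
          rw [ENNReal.mul_rpow_of_nonneg _ _ h2, ENNReal.mul_rpow_of_nonneg _ _ h2, mul_assoc]
          rfl
      _ ≤ (S ^ (2⁻¹ : ℝ) * wnorm a q f) ^ (k + 1) := by
          rw [pow_succ']
          gcongr

end Convolution

section Limit

variable {A : Type*} {a : (A →₀ ℕ) → ℝ}

theorem tendsto_wsum_atTop (h0 : a 0 = 1) (hlt : ∀ α ≠ 0, 1 < a α) {f : (A →₀ ℕ) → ℂ} {p₀ : ℕ}
    (hf : wsum a p₀ f ≠ ⊤) :
    Tendsto (fun q => wsum a q f) atTop (𝓝 (ENNReal.ofReal (‖f 0‖ ^ 2))) := by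
  classical
  have hle (α : A →₀ ℕ) : 1 ≤ a α := by
    rcases eq_or_ne α 0 with rfl | hα
    exacts [h0.ge, (hlt α hα).le]
  set g : ℕ → (A →₀ ℕ) → ℝ := fun q α => ‖f α‖ ^ 2 / a α ^ q
  have hg_nonneg (q : ℕ) (α : A →₀ ℕ) : 0 ≤ g q α := by have := hle α; positivity
  have hg_anti (α : A →₀ ℕ) : Antitone (g · α) := fun q q' hqq' =>
    div_le_div_of_nonneg_left (sq_nonneg _) (by have := hle α; positivity)
      (pow_le_pow_right₀ (hle α) hqq')
  have hsum : Summable (g p₀) :=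
    (ENNReal.summable_toReal hf).congr fun α => ENNReal.toReal_ofReal (hg_nonneg p₀ α)
  have hg_lim (α : A →₀ ℕ) :
      Tendsto (g · α) atTop (𝓝 (if α = 0 then ‖f 0‖ ^ 2 else 0)) := by
    split_ifs with hα
    · subst hα
      simp [g, h0]
    · simpa [g, div_eq_mul_inv, ← inv_pow] using
        (tendsto_pow_atTop_nhds_zero_of_lt_one (inv_nonneg.2 (zero_le_one.trans (hle α)))
          (inv_lt_one_of_one_lt₀ (hlt α hα))).const_mul (‖f α‖ ^ 2)
  have hlim : Tendsto (fun q => ∑' α, g q α) atTop (𝓝 (‖f 0‖ ^ 2)) := by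
    simpa using tendsto_tsum_of_dominated_convergence hsum hg_lim
      (eventually_atTop.2 ⟨p₀, fun q hq α => by
        rw [Real.norm_of_nonneg (hg_nonneg q α)]; exact hg_anti α hq⟩)
  refine ((ENNReal.continuous_ofReal.tendsto _).comp hlim).congr' ?_
  filter_upwards [eventually_ge_atTop p₀] with q hq
  exact ENNReal.ofReal_tsum_of_nonneg (hg_nonneg q)
    (hsum.of_nonneg_of_le (hg_nonneg q) fun α => hg_anti α hq)

theorem tendsto_wnorm_atTop (h0 : a 0 = 1) (hlt : ∀ α ≠ 0, 1 < a α) {f : (A →₀ ℕ) → ℂ} {p₀ : ℕ}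
    (hf : wnorm a p₀ f < ⊤) :
    Tendsto (fun q => wnorm a q f) atTop (𝓝 (ENNReal.ofReal ‖f 0‖)) := by
  have hsum : wsum a p₀ f ≠ ⊤ := by
    intro htop
    simp [wnorm, htop] at hf
  have := ((ENNReal.continuous_rpow_const (y := 2⁻¹)).tendsto _).comp
    (tendsto_wsum_atTop h0 hlt hsum)
  have hsqrt : (‖f 0‖ ^ 2) ^ (2⁻¹ : ℝ) = ‖f 0‖ := by
    exact_mod_cast Real.pow_rpow_inv_natCast (norm_nonneg (f 0)) two_ne_zero
  rwa [ENNReal.ofReal_rpow_of_nonneg (sq_nonneg _) (by norm_num), hsqrt] at this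

end Limit

theorem tsum_ofReal_norm_mul_lt_top {φ : ℕ → ℂ} {R : ℝ}
    (hφ : ∀ r : ℝ, 0 < r → r < R → Summable fun n => ‖φ n‖ * r ^ n)
    {u : ℕ → ℝ≥0∞} {K : ℝ≥0∞} (hu : ∀ n, u n ≤ K ^ n) (hK : K < ENNReal.ofReal R) :
    ∑' n, ENNReal.ofReal ‖φ n‖ * u n < ⊤ := by
  obtain ⟨r, hr0, hKr, hrR⟩ := ENNReal.lt_iff_exists_real_btwn.mp hK
  have hr : 0 < r := ENNReal.ofReal_pos.mp (hKr.trans_le' bot_le)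
  calc ∑' n, ENNReal.ofReal ‖φ n‖ * u n
      ≤ ∑' n, ENNReal.ofReal (‖φ n‖ * r ^ n) := by
        refine ENNReal.tsum_le_tsum fun n => ?_
        rw [ENNReal.ofReal_mul (norm_nonneg _), ENNReal.ofReal_pow hr0]
        gcongr
        exact (hu n).trans (pow_le_pow_left₀ bot_le hKr.le n)
    _ = ENNReal.ofReal (∑' n, ‖φ n‖ * r ^ n) :=
        (ENNReal.ofReal_tsum_of_nonneg (fun n => by positivity)
          (hφ r hr ((ENNReal.ofReal_lt_ofReal_iff_of_nonneg hr0).mp hrR))).symm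
    _ < ⊤ := ENNReal.ofReal_lt_top

theorem powerSeries_eval_summable_general {A : Type*} [DecidableEq A]
    (d : ℕ) (a : (A →₀ ℕ) → ℝ)
    (hpos : ∀ α, 0 < a α)
    (h0 : a 0 = 1)
    (hgen : ∀ n : A, 1 < a (Finsupp.single n 1))
    (hsup : ∀ α β : A →₀ ℕ, a α * a β ≤ a (α + β))
    (R : ℝ) (φ : ℕ → ℂ)
    (hφ : ∀ r : ℝ, 0 < r → r < R → Summable fun n : ℕ => ‖φ n‖ * r ^ n)
    (f : (A →₀ ℕ) → ℂ) (p₀ : ℕ) (hf : wnorm a p₀ f < ⊤)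
    (hf0 : ‖f 0‖ < R / Real.sqrt (∑' α : A →₀ ℕ, 1 / (a α) ^ d)) :
    ∃ p : ℕ, (∑' n : ℕ, ENNReal.ofReal (‖φ n‖) * wnorm a p (convPow f n)) < ⊤ := by
  set S := ∑' α : A →₀ ℕ, 1 / a α ^ d
  -- A non-summable `tsum` is `0`, and so is `R / 0`: `hf0` rules both out.
  have hsqrt : 0 < √S := by
    refine (Real.sqrt_nonneg S).lt_of_ne fun h => ?_
    rw [← h, div_zero] at hf0
    exact (norm_nonneg _).not_gt hf0
  have hS : Summable fun α : A →₀ ℕ => 1 / a α ^ d := by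
    by_contra h
    simp [S, tsum_eq_zero_of_not_summable h] at hsqrt
  have hK : (∑' α, ENNReal.ofReal (1 / a α ^ d)) ^ (2⁻¹ : ℝ) = ENNReal.ofReal √S := by
    rw [← ENNReal.ofReal_tsum_of_nonneg (fun α => by have := hpos α; positivity) hS,
      ENNReal.ofReal_rpow_of_nonneg (Real.sqrt_pos.mp hsqrt).le (by norm_num),
      Real.sqrt_eq_rpow, one_div]
  have hlim : Tendsto (fun q => ENNReal.ofReal √S * wnorm a q f) atTop
      (𝓝 (ENNReal.ofReal √S * ENNReal.ofReal ‖f 0‖)) :=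
    ENNReal.Tendsto.const_mul
      (tendsto_wnorm_atTop h0 (fun α hα => one_lt_of_superexp h0 hgen hsup hα) hf)
      (Or.inr ENNReal.ofReal_ne_top)
  have hlt : ENNReal.ofReal √S * ENNReal.ofReal ‖f 0‖ < ENNReal.ofReal R := by
    rw [← ENNReal.ofReal_mul hsqrt.le, ENNReal.ofReal_lt_ofReal_iff_of_nonneg (by positivity)]
    rwa [lt_div_iff₀ hsqrt, mul_comm] at hf0
  obtain ⟨q, hq⟩ := (hlim.eventually_lt_const hlt).exists
  refine ⟨q + d, tsum_ofReal_norm_mul_lt_top hφ (fun n => ?_) hq⟩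
  rw [← hK]
  exact wnorm_convPow_le hpos h0 hsup d q f n

/-- Power series with radius of convergence `R` can be evaluated (absolutely, in some
weighted norm `‖·‖_p`) at any `f` whose generalized expectation satisfies
`|f 0| < R / A_d`, where `A_d = (∑_α a α ^ (-d))^{1/2}`. -/
theorem powerSeries_eval_summable {A : Type*} [DecidableEq A]
    (d : ℕ) (hd : 1 ≤ d) (a : (A →₀ ℕ) → ℝ)
    (hpos : ∀ α, 0 < a α)
    (h0 : a 0 = 1)
    (hgen : ∀ n : A, 1 < a (Finsupp.single n 1))
    (hreg : Summable fun n : A => 1 / ((a (Finsupp.single n 1)) ^ d - 1))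
    (hsup : ∀ α β : A →₀ ℕ, a α * a β ≤ a (α + β))
    (R : ℝ) (hR : 0 < R) (φ : ℕ → ℂ)
    (hφ : ∀ r : ℝ, 0 < r → r < R → Summable fun n : ℕ => ‖φ n‖ * r ^ n)
    (f : (A →₀ ℕ) → ℂ) (p₀ : ℕ) (hf : wnorm a p₀ f < ⊤)
    (hf0 : ‖f 0‖ < R / Real.sqrt (∑' α : A →₀ ℕ, 1 / (a α) ^ d)) :
    ∃ p : ℕ, (∑' n : ℕ, ENNReal.ofReal (‖φ n‖) * wnorm a p (convPow f n)) < ⊤ :=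
  powerSeries_eval_summable_general d a hpos h0 hgen hsup R φ hφ f p₀ hf hf0
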